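/- arXiv:2212.03522 — 6 statements merged into one kernel-verified Lean document; each statement's English description precedes it below -/
import Mathlib

section
/- Let L = ⊕_{i ∈ Z/nZ} L_i be a (Z/nZ)-graded Lie algebra over a field, and let T be a homogeneous ideal of L having exactly e nonzero homogeneous components (i.e., T_i = T ∩ L_i is nonzero for exactly e indices i). Then the number of indices i ∈ Z/nZ such that [L_i, T] ≠ 0 is at most e^2. -/
theorem stmt_5 (n e : ℕ) (hpos : 0 < n)
    (K : Type) (L : Type) [Field K] [LieRing L] [LieAlgebra K L]
    (A : ZMod n → Submodule K L)
    (hgrade : ∀ i j : ZMod n, ∀ x ∈ A i, ∀ y ∈ A j, ⁅x, y⁆ ∈ A (i + j))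
    (hdirect : DirectSum.IsInternal A)
    (T : LieIdeal K L)
    (hhom : (T : Submodule K L) = ⨆ i : ZMod n, (T : Submodule K L) ⊓ A i)
    (he : {i : ZMod n | (T : Submodule K L) ⊓ A i ≠ ⊥}.ncard = e) :
    {i : ZMod n | ∃ x ∈ A i, ∃ y ∈ T, ⁅x, y⁆ ≠ 0}.ncard ≤ e ^ 2 := by
  haveI : NeZero n := ⟨hpos.ne'⟩
  set S := {i : ZMod n | (T : Submodule K L) ⊓ A i ≠ ⊥} with hSdef
  have hsub : {i : ZMod n | ∃ x ∈ A i, ∃ y ∈ T, ⁅x, y⁆ ≠ 0} ⊆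
      (fun p : ZMod n × ZMod n => p.1 - p.2) '' (S ×ˢ S) := by
    rintro i ⟨x, hx, y, hy, hxy⟩
    by_contra hcon
    apply hxy
    set Ker : Submodule K L :=
      { carrier := {z : L | ⁅x, z⁆ = 0}
        add_mem' := fun {a b} ha hb => by
          simp only [Set.mem_setOf_eq] at *
          rw [lie_add, ha, hb, add_zero]
        zero_mem' := by simp
        smul_mem' := fun c a ha => by
          simp only [Set.mem_setOf_eq] at *
          rw [lie_smul, ha, smul_zero] } with hKer
    have hle : (⨆ j : ZMod n, (T : Submodule K L) ⊓ A j) ≤ Ker := by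
      apply iSup_le
      intro j z hz
      by_contra hz0
      have hz0' : ⁅x, z⁆ ≠ 0 := hz0
      have hzT : z ∈ T := hz.1
      have hzA : z ∈ A j := hz.2
      have hzne : z ≠ 0 := by rintro rfl; exact hz0' (lie_zero x)
      have hjS : j ∈ S := by
        intro hbot
        rw [hbot] at hz
        exact hzne hz
      have hbT : ⁅x, z⁆ ∈ T := T.lie_mem hzT
      have hbA : ⁅x, z⁆ ∈ A (i + j) := hgrade i j x hx z hzA
      have hijS : i + j ∈ S := by
        intro hbot
        have : ⁅x, z⁆ ∈ (T : Submodule K L) ⊓ A (i + j) := ⟨hbT, hbA⟩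
        rw [hbot] at this
        exact hz0' this
      exact hcon ⟨(i + j, j), ⟨hijS, hjS⟩, by simp⟩
    have : y ∈ Ker := hle (by rw [← hhom]; exact hy)
    exact this
  have hfin : ∀ s : Set (ZMod n), s.Finite := fun s => s.toFinite
  calc {i : ZMod n | ∃ x ∈ A i, ∃ y ∈ T, ⁅x, y⁆ ≠ 0}.ncard
      ≤ ((fun p : ZMod n × ZMod n => p.1 - p.2) '' (S ×ˢ S)).ncard :=
        Set.ncard_le_ncard hsub (Set.toFinite _)
    _ ≤ (S ×ˢ S).ncard := Set.ncard_image_le (Set.toFinite _)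
    _ = S.ncard * S.ncard := by
        classical
        rw [Set.ncard_eq_toFinset_card', Set.ncard_eq_toFinset_card',
          Set.toFinset_prod, Finset.card_product]
    _ = e ^ 2 := by rw [he, sq]
end

section
/- Let L = ⊕_{i ∈ Z/nZ} L_i be a (Z/nZ)-graded Lie algebra over a field with L_0 = 0 and n odd. Suppose that [[x_{d_1}, x_{d_2}], [x_{d_3}, x]] = 0 for all homogeneous x_{d_i} ∈ L_{d_i} and all x ∈ L, whenever the sequence (d_1, d_2, d_3) is (-1)-independent in Z/nZ. Then L is metabelian, i.e., [[L,L],[L,L]] = 0. -/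
def NegOneDependent {n k : ℕ} (a : Fin k → ZMod n) : Prop :=
  ∃ t : Fin k → Bool, (∃ i, t i = true) ∧ ∑ i, (if t i then a i else 0) = 0

def NegOneIndependent {n k : ℕ} (a : Fin k → ZMod n) : Prop :=
  ¬ NegOneDependent a

/-! For homogeneous `a, b, c, d` of degrees `α, β, γ, δ`, the bracket `⁅⁅a, b⁆, ⁅c, d⁆⁆` changes
only by a sign when `a, b` or `c, d` or the two pairs are swapped, so the hypothesis kills it as
soon as one of `(α, β, γ)`, `(α, β, δ)`, `(γ, δ, α)`, `(γ, δ, β)` is `(-1)`-independent. Since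
`L₀ = 0`, homogeneous elements whose degrees add up to `0` commute. If all four triples have a
vanishing subsum, then, `2` being invertible modulo the odd `n`, either `⁅a, b⁆` commutes with
`c` and `d`, or up to the symmetries `a` commutes with `c` and `d` and
`⁅⁅b, c⁆, d⁆ = ⁅c, ⁅b, d⁆⁆ = 0`; in both cases the Jacobi identity kills the bracket.
Multilinearity extends this to all of `L`, so `[L, L]` is abelian. -/

theorem ZMod.eq_zero_of_add_self_eq_zero {n : ℕ} (hn : Odd n) {x : ZMod n} (hx : x + x = 0) :
    x = 0 := by
  have h2 : IsUnit (2 : ZMod n) := by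
    exact_mod_cast (ZMod.isUnit_iff_coprime 2 n).2 (Nat.coprime_two_left.2 hn)
  rwa [← two_mul, h2.mul_right_eq_zero] at hx

theorem NegOneDependent.fin_three {n : ℕ} {x y z : ZMod n} (h : NegOneDependent ![x, y, z]) :
    x = 0 ∨ y = 0 ∨ z = 0 ∨ x + y = 0 ∨ x + z = 0 ∨ y + z = 0 ∨ x + y + z = 0 := by
  obtain ⟨t, ⟨i, hi⟩, hsum⟩ := h
  rw [Fin.sum_univ_three] at hsum
  fin_cases i <;> cases h0 : t 0 <;> cases h1 : t 1 <;> cases h2 : t 2 <;> simp_all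

section LieRing

variable {L : Type*} [LieRing L]

theorem lie_lie_eq_zero_of_lie_eq_zero {u c d : L} (hc : ⁅u, c⁆ = 0) (hd : ⁅u, d⁆ = 0) :
    ⁅u, ⁅c, d⁆⁆ = 0 := by
  rw [leibniz_lie, hc, hd, zero_lie, lie_zero, add_zero]

theorem lie_lie_lie_eq_zero_of_lie_eq_zero {a b c d : L} (hac : ⁅a, c⁆ = 0) (had : ⁅a, d⁆ = 0)
    (hbcd : ⁅⁅b, c⁆, d⁆ = 0) (hcbd : ⁅c, ⁅b, d⁆⁆ = 0) :
    ⁅⁅a, b⁆, ⁅c, d⁆⁆ = 0 := by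
  have hca : ⁅c, a⁆ = 0 := by rw [← lie_skew, hac, neg_zero]
  have habc : ⁅⁅a, b⁆, c⁆ = ⁅a, ⁅b, c⁆⁆ := by rw [lie_lie, hac, lie_zero, sub_zero]
  have habd : ⁅⁅a, b⁆, d⁆ = ⁅a, ⁅b, d⁆⁆ := by rw [lie_lie, had, lie_zero, sub_zero]
  rw [leibniz_lie, habc, habd, lie_lie, hbcd, had, leibniz_lie c a, hcbd, hca]
  simp

theorem lie_eq_zero_comm {u v : L} : ⁅u, v⁆ = 0 ↔ ⁅v, u⁆ = 0 := by
  rw [← lie_skew, neg_eq_zero]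

theorem lie_lie_eq_zero_comm {a b u : L} : ⁅⁅a, b⁆, u⁆ = 0 ↔ ⁅⁅b, a⁆, u⁆ = 0 := by
  rw [← lie_skew b, neg_lie, neg_eq_zero]

end LieRing

section Graded

variable {K L G : Type*} [CommRing K] [LieRing L] [LieAlgebra K L] [AddCommGroup G]
  {A : G → Submodule K L}

theorem lie_eq_zero_of_mem_of_add_eq_zero
    (hA : ∀ i j, ∀ x ∈ A i, ∀ y ∈ A j, ⁅x, y⁆ ∈ A (i + j)) (hA₀ : A 0 = ⊥)
    {i j : G} (hij : i + j = 0) {x y : L} (hx : x ∈ A i) (hy : y ∈ A j) : ⁅x, y⁆ = 0 := by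
  simpa [hij, hA₀] using hA i j x hx y hy

variable {α β γ δ : G} {a b c d : L}

theorem lie_lie_lie_eq_zero_of_add_add_eq_zero
    (hA : ∀ i j, ∀ x ∈ A i, ∀ y ∈ A j, ⁅x, y⁆ ∈ A (i + j)) (hA₀ : A 0 = ⊥)
    (ha : a ∈ A α) (hb : b ∈ A β) (hc : c ∈ A γ) (hd : d ∈ A δ)
    (hαβγ : α + β + γ = 0) (hαβδ : α + β + δ = 0) : ⁅⁅a, b⁆, ⁅c, d⁆⁆ = 0 :=
  have hab := hA α β a ha b hb
  lie_lie_eq_zero_of_lie_eq_zero (lie_eq_zero_of_mem_of_add_eq_zero hA hA₀ hαβγ hab hc)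
    (lie_eq_zero_of_mem_of_add_eq_zero hA hA₀ hαβδ hab hd)

theorem lie_lie_lie_eq_zero_of_add_eq_zero
    (hA : ∀ i j, ∀ x ∈ A i, ∀ y ∈ A j, ⁅x, y⁆ ∈ A (i + j)) (hA₀ : A 0 = ⊥)
    (ha : a ∈ A α) (hb : b ∈ A β) (hc : c ∈ A γ) (hd : d ∈ A δ)
    (hαγ : α + γ = 0) (hαδ : α + δ = 0) (hβγδ : β + γ + δ = 0) : ⁅⁅a, b⁆, ⁅c, d⁆⁆ = 0 :=
  lie_lie_lie_eq_zero_of_lie_eq_zero (lie_eq_zero_of_mem_of_add_eq_zero hA hA₀ hαγ ha hc)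
    (lie_eq_zero_of_mem_of_add_eq_zero hA hA₀ hαδ ha hd)
    (lie_eq_zero_of_mem_of_add_eq_zero hA hA₀ hβγδ (hA β γ b hb c hc) hd)
    (lie_eq_zero_of_mem_of_add_eq_zero hA hA₀ (by rw [← hβγδ]; abel) hc (hA β δ b hb d hd))

theorem lie_lie_lie_eq_zero_of_degenerate
    (hA : ∀ i j, ∀ x ∈ A i, ∀ y ∈ A j, ⁅x, y⁆ ∈ A (i + j)) (hA₀ : A 0 = ⊥)
    (ha : a ∈ A α) (hb : b ∈ A β) (hc : c ∈ A γ) (hd : d ∈ A δ)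
    (h : α = 0 ∨ β = 0 ∨ γ = 0 ∨ δ = 0 ∨ α + β = 0 ∨ γ + δ = 0 ∨ α + β + γ + δ = 0) :
    ⁅⁅a, b⁆, ⁅c, d⁆⁆ = 0 := by
  have eq_zero {i : G} {x : L} (hi : i = 0) (hx : x ∈ A i) : x = 0 := by
    simpa [hi, hA₀] using hx
  rcases h with h | h | h | h | h | h | h
  · simp [eq_zero h ha]
  · simp [eq_zero h hb]
  · simp [eq_zero h hc]
  · simp [eq_zero h hd]
  · simp [lie_eq_zero_of_mem_of_add_eq_zero hA hA₀ h ha hb]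
  · simp [lie_eq_zero_of_mem_of_add_eq_zero hA hA₀ h hc hd]
  · exact lie_eq_zero_of_mem_of_add_eq_zero hA hA₀ (by rw [← h]; abel)
      (hA α β a ha b hb) (hA γ δ c hc d hd)

end Graded

/- Each disjunct is a degree pattern in which `⁅⁅a, b⁆, ⁅c, d⁆⁆` vanishes by
`lie_lie_lie_eq_zero_of_add_eq_zero` (up to the symmetries of this bracket) or by
`lie_lie_lie_eq_zero_of_add_add_eq_zero`. -/
theorem configuration_of_subsum_eq_zero {G : Type*} [AddCommGroup G]
    (hG : ∀ x : G, x + x = 0 → x = 0) {α β γ δ : G}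
    (hα : α ≠ 0) (hβ : β ≠ 0) (hγ : γ ≠ 0) (hδ : δ ≠ 0) (hαβ : α + β ≠ 0) (hγδ : γ + δ ≠ 0)
    (hαβγδ : α + β + γ + δ ≠ 0)
    (h₁ : α = 0 ∨ β = 0 ∨ γ = 0 ∨ α + β = 0 ∨ α + γ = 0 ∨ β + γ = 0 ∨ α + β + γ = 0)
    (h₂ : α = 0 ∨ β = 0 ∨ δ = 0 ∨ α + β = 0 ∨ α + δ = 0 ∨ β + δ = 0 ∨ α + β + δ = 0)
    (h₃ : γ = 0 ∨ δ = 0 ∨ α = 0 ∨ γ + δ = 0 ∨ γ + α = 0 ∨ δ + α = 0 ∨ γ + δ + α = 0)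
    (h₄ : γ = 0 ∨ δ = 0 ∨ β = 0 ∨ γ + δ = 0 ∨ γ + β = 0 ∨ δ + β = 0 ∨ γ + δ + β = 0) :
    (α + γ = 0 ∧ α + δ = 0 ∧ β + γ + δ = 0) ∨ (β + γ = 0 ∧ β + δ = 0 ∧ α + γ + δ = 0) ∨
      (γ + α = 0 ∧ γ + β = 0 ∧ δ + α + β = 0) ∨ (δ + α = 0 ∧ δ + β = 0 ∧ γ + α + β = 0) ∨
      (α + β + γ = 0 ∧ α + β + δ = 0) := by
  grind

theorem lie_lie_lie_eq_zero_of_mem {K L : Type*} [CommRing K] [LieRing L] [LieAlgebra K L]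
    {n : ℕ} (hn : Odd n) {A : ZMod n → Submodule K L}
    (hA : ∀ i j, ∀ x ∈ A i, ∀ y ∈ A j, ⁅x, y⁆ ∈ A (i + j)) (hA₀ : A 0 = ⊥)
    (hsel : ∀ d : Fin 3 → ZMod n, NegOneIndependent d →
      ∀ x₁ ∈ A (d 0), ∀ x₂ ∈ A (d 1), ∀ x₃ ∈ A (d 2), ∀ x : L, ⁅⁅x₁, x₂⁆, ⁅x₃, x⁆⁆ = 0)
    {α β γ δ : ZMod n} {a b c d : L} (ha : a ∈ A α) (hb : b ∈ A β) (hc : c ∈ A γ)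
    (hd : d ∈ A δ) : ⁅⁅a, b⁆, ⁅c, d⁆⁆ = 0 := by
  by_cases hdeg : α = 0 ∨ β = 0 ∨ γ = 0 ∨ δ = 0 ∨ α + β = 0 ∨ γ + δ = 0 ∨ α + β + γ + δ = 0
  · exact lie_lie_lie_eq_zero_of_degenerate hA hA₀ ha hb hc hd hdeg
  push Not at hdeg
  obtain ⟨hα, hβ, hγ, hδ, hαβ, hγδ, hαβγδ⟩ := hdeg
  by_cases h₁ : NegOneDependent ![α, β, γ]
  swap; · exact hsel _ h₁ a ha b hb c hc d
  by_cases h₂ : NegOneDependent ![α, β, δ]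
  swap; · rw [← lie_skew c d, lie_neg, hsel _ h₂ a ha b hb d hd c, neg_zero]
  by_cases h₃ : NegOneDependent ![γ, δ, α]
  swap; · rw [lie_eq_zero_comm]; exact hsel _ h₃ c hc d hd a ha b
  by_cases h₄ : NegOneDependent ![γ, δ, β]
  swap; · rw [lie_eq_zero_comm, ← lie_skew a b, lie_neg, hsel _ h₄ c hc d hd b hb a, neg_zero]
  rcases configuration_of_subsum_eq_zero (fun _ ↦ ZMod.eq_zero_of_add_self_eq_zero hn)
      hα hβ hγ hδ hαβ hγδ hαβγδ h₁.fin_three h₂.fin_three h₃.fin_three h₄.fin_three with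
    ⟨e₁, e₂, e₃⟩ | ⟨e₁, e₂, e₃⟩ | ⟨e₁, e₂, e₃⟩ | ⟨e₁, e₂, e₃⟩ | ⟨e₁, e₂⟩
  · exact lie_lie_lie_eq_zero_of_add_eq_zero hA hA₀ ha hb hc hd e₁ e₂ e₃
  · rw [lie_lie_eq_zero_comm]
    exact lie_lie_lie_eq_zero_of_add_eq_zero hA hA₀ hb ha hc hd e₁ e₂ e₃
  · rw [lie_eq_zero_comm]
    exact lie_lie_lie_eq_zero_of_add_eq_zero hA hA₀ hc hd ha hb e₁ e₂ e₃
  · rw [lie_eq_zero_comm, lie_lie_eq_zero_comm]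
    exact lie_lie_lie_eq_zero_of_add_eq_zero hA hA₀ hd hc ha hb e₁ e₂ e₃
  · exact lie_lie_lie_eq_zero_of_add_add_eq_zero hA hA₀ ha hb hc hd e₁ e₂

theorem lie_lie_lie_eq_zero_of_iSup_eq_top {K L ι : Type*} [CommRing K] [LieRing L]
    [LieAlgebra K L] {A : ι → Submodule K L} (hA : iSup A = ⊤)
    (h : ∀ i j k l, ∀ a ∈ A i, ∀ b ∈ A j, ∀ c ∈ A k, ∀ d ∈ A l, ⁅⁅a, b⁆, ⁅c, d⁆⁆ = 0)
    (a b c d : L) : ⁅⁅a, b⁆, ⁅c, d⁆⁆ = 0 := by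
  have hmem (x : L) : x ∈ iSup A := hA ▸ Submodule.mem_top
  refine Submodule.iSup_induction A (motive := fun a ↦ ∀ b c d : L, ⁅⁅a, b⁆, ⁅c, d⁆⁆ = 0)
    (hmem a) ?_ (by simp) (fun x y hx hy b c d ↦ by simp [add_lie, hx, hy]) b c d
  intro i a ha b
  refine Submodule.iSup_induction A (motive := fun b ↦ ∀ c d : L, ⁅⁅a, b⁆, ⁅c, d⁆⁆ = 0)
    (hmem b) ?_ (by simp) (fun x y hx hy c d ↦ by simp [lie_add, add_lie, hx, hy])
  intro j b hb c
  refine Submodule.iSup_induction A (motive := fun c ↦ ∀ d : L, ⁅⁅a, b⁆, ⁅c, d⁆⁆ = 0)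
    (hmem c) ?_ (by simp) (fun x y hx hy d ↦ by simp [lie_add, add_lie, hx, hy])
  intro k c hc d
  refine Submodule.iSup_induction A (motive := fun d ↦ ⁅⁅a, b⁆, ⁅c, d⁆⁆ = 0)
    (hmem d) ?_ (by simp) (fun x y hx hy ↦ by simp [lie_add, hx, hy])
  intro l d hd
  exact h i j k l a ha b hb c hc d hd

namespace LieAlgebra

variable {R L M : Type*} [CommRing R] [LieRing L] [LieAlgebra R L] [AddCommGroup M] [Module R M]

theorem map_eq_zero_of_mem_derivedSeries_one (f : L →ₗ[R] M) (hf : ∀ a b : L, f ⁅a, b⁆ = 0)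
    {x : L} (hx : x ∈ derivedSeries R L 1) : f x = 0 := by
  rw [derivedSeries_def, derivedSeriesOfIdeal_succ, derivedSeriesOfIdeal_zero,
    ← LieSubmodule.mem_toSubmodule, LieSubmodule.lieIdeal_oper_eq_linear_span'] at hx
  refine (Submodule.span_le (p := LinearMap.ker f)).2 ?_ hx
  rintro _ ⟨a, -, b, -, rfl⟩
  exact hf a b

theorem derivedSeries_two_eq_bot_of_lie_lie_lie_eq_zero
    (h : ∀ a b c d : L, ⁅⁅a, b⁆, ⁅c, d⁆⁆ = 0) : derivedSeries R L 2 = ⊥ := by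
  rw [derivedSeries_def, derivedSeriesOfIdeal_succ, ← derivedSeries_def,
    LieSubmodule.lie_eq_bot_iff]
  have hD₁ : ∀ z ∈ derivedSeries R L 1, ∀ a b : L, ⁅z, ⁅a, b⁆⁆ = 0 := fun z hz a b ↦ by
    rw [lie_eq_zero_comm]
    exact map_eq_zero_of_mem_derivedSeries_one (ad R L ⁅a, b⁆) (h a b) hz
  exact fun x hx y hy ↦
    lie_eq_zero_comm.2 (map_eq_zero_of_mem_derivedSeries_one (ad R L y) (hD₁ y hy) hx)

end LieAlgebra

theorem stmt_6_general (n : ℕ) (hodd : Odd n)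
    (K : Type) (L : Type) [Field K] [LieRing L] [LieAlgebra K L]
    (A : ZMod n → Submodule K L)
    (hgrade : ∀ i j : ZMod n, ∀ x ∈ A i, ∀ y ∈ A j, ⁅x, y⁆ ∈ A (i + j))
    (hdirect : DirectSum.IsInternal A)
    (h0 : A 0 = ⊥)
    (hsel : ∀ d : Fin 3 → ZMod n, NegOneIndependent d →
      ∀ x₁ ∈ A (d 0), ∀ x₂ ∈ A (d 1), ∀ x₃ ∈ A (d 2), ∀ x : L,
        ⁅⁅x₁, x₂⁆, ⁅x₃, x⁆⁆ = 0) :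
    LieAlgebra.derivedSeries K L 2 = ⊥ :=
  LieAlgebra.derivedSeries_two_eq_bot_of_lie_lie_lie_eq_zero <|
    lie_lie_lie_eq_zero_of_iSup_eq_top hdirect.submodule_iSup_eq_top
      fun _ _ _ _ _ ha _ hb _ hc _ hd ↦ lie_lie_lie_eq_zero_of_mem hodd hgrade h0 hsel ha hb hc hd

theorem stmt_6 (n : ℕ) (hpos : 0 < n) (hodd : Odd n)
    (K : Type) (L : Type) [Field K] [LieRing L] [LieAlgebra K L]
    (A : ZMod n → Submodule K L)
    (hgrade : ∀ i j : ZMod n, ∀ x ∈ A i, ∀ y ∈ A j, ⁅x, y⁆ ∈ A (i + j))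
    (hdirect : DirectSum.IsInternal A)
    (h0 : A 0 = ⊥)
    (hsel : ∀ d : Fin 3 → ZMod n, NegOneIndependent d →
      ∀ x₁ ∈ A (d 0), ∀ x₂ ∈ A (d 1), ∀ x₃ ∈ A (d 2), ∀ x : L,
        ⁅⁅x₁, x₂⁆, ⁅x₃, x⁆⁆ = 0) :
    LieAlgebra.derivedSeries K L 2 = ⊥ :=
  stmt_6_general n hodd K L A hgrade hdirect h0 hsel
end

section
/- Let L = ⊕_{i ∈ Z/nZ} L_i be a (Z/nZ)-graded Lie algebra over a field with L_0 = 0, n odd, satisfying the selective metabelian condition. Let a, b, c ∈ Z/nZ with the order of a in Z/nZ greater than 3. Then for every x_c ∈ L_c and any seven (possibly different) elements y_1,...,y_7 ∈ [L_b, L_{a-b}] ⊆ L_a, the left-normalized product [x_c, y_1, y_2, ..., y_7] equals 0. -/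
set_option maxHeartbeats 1000000 in
lemma indep4 {n : ℕ} (d1 d2 d3 d4 : ZMod n)
    (h1 : d1 ≠ 0) (h2 : d2 ≠ 0) (h3 : d3 ≠ 0) (h4 : d4 ≠ 0)
    (h12 : d1 + d2 ≠ 0) (h13 : d1 + d3 ≠ 0) (h14 : d1 + d4 ≠ 0)
    (h23 : d2 + d3 ≠ 0) (h24 : d2 + d4 ≠ 0) (h34 : d3 + d4 ≠ 0)
    (h123 : d1 + d2 + d3 ≠ 0) (h124 : d1 + d2 + d4 ≠ 0)
    (h134 : d1 + d3 + d4 ≠ 0) (h234 : d2 + d3 + d4 ≠ 0)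
    (h1234 : d1 + d2 + d3 + d4 ≠ 0) :
    NegOneIndependent ![d1, d2, d3, d4] := by
  rintro ⟨t, ⟨i, hi⟩, hsum⟩
  rcases Bool.eq_false_or_eq_true (t 0) with e0 | e0 <;>
  rcases Bool.eq_false_or_eq_true (t 1) with e1 | e1 <;>
  rcases Bool.eq_false_or_eq_true (t 2) with e2 | e2 <;>
  rcases Bool.eq_false_or_eq_true (t 3) with e3 | e3 <;>
  · first
    | (simp [e0, e1, e2, e3, Fin.sum_univ_four] at hsum;
       exact absurd hsum (by assumption))
    | (fin_cases i <;> simp_all)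

lemma sel4 {n : ℕ} {K L : Type} [Field K] [LieRing L] [LieAlgebra K L]
    (A : ZMod n → Submodule K L)
    (hsel : ∀ d : Fin 4 → ZMod n, NegOneIndependent d →
      ∀ x₁ ∈ A (d 0), ∀ x₂ ∈ A (d 1), ∀ x₃ ∈ A (d 2), ∀ x₄ ∈ A (d 3),
        ⁅⁅x₁, x₂⁆, ⁅x₃, x₄⁆⁆ = 0)
    (d1 d2 d3 d4 : ZMod n)
    (h1 : d1 ≠ 0) (h2 : d2 ≠ 0) (h3 : d3 ≠ 0) (h4 : d4 ≠ 0)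
    (h12 : d1 + d2 ≠ 0) (h13 : d1 + d3 ≠ 0) (h14 : d1 + d4 ≠ 0)
    (h23 : d2 + d3 ≠ 0) (h24 : d2 + d4 ≠ 0) (h34 : d3 + d4 ≠ 0)
    (h123 : d1 + d2 + d3 ≠ 0) (h124 : d1 + d2 + d4 ≠ 0)
    (h134 : d1 + d3 + d4 ≠ 0) (h234 : d2 + d3 + d4 ≠ 0)
    (h1234 : d1 + d2 + d3 + d4 ≠ 0) :
    ∀ x1 ∈ A d1, ∀ x2 ∈ A d2, ∀ x3 ∈ A d3, ∀ x4 ∈ A d4,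
      ⁅⁅x1, x2⁆, ⁅x3, x4⁆⁆ = 0 := by
  intro x1 hx1 x2 hx2 x3 hx3 x4 hx4
  exact hsel ![d1, d2, d3, d4]
    (indep4 d1 d2 d3 d4 h1 h2 h3 h4 h12 h13 h14 h23 h24 h34 h123 h124 h134
      h234 h1234)
    x1 (by simpa using hx1) x2 (by simpa using hx2) x3 (by simpa using hx3)
    x4 (by simpa using hx4)

lemma swap_br {L : Type} [LieRing L] (p q r : L) (h : ⁅q, r⁆ = 0) :
    ⁅⁅p, q⁆, r⁆ = ⁅⁅p, r⁆, q⁆ := by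
  rw [lie_lie, h, lie_zero, zero_sub, ← lie_skew, neg_neg]

lemma expand_br {L : Type} [LieRing L] (w u v : L) :
    ⁅w, ⁅u, v⁆⁆ = ⁅⁅w, u⁆, v⁆ - ⁅⁅w, v⁆, u⁆ := by
  rw [leibniz_lie]
  have h := lie_skew u ⁅w, v⁆
  rw [← h]
  abel

theorem stmt_8 (n : ℕ) (hpos : 0 < n) (hodd : Odd n)
    (K : Type) (L : Type) [Field K] [LieRing L] [LieAlgebra K L]
    (A : ZMod n → Submodule K L)
    (hgrade : ∀ i j : ZMod n, ∀ x ∈ A i, ∀ y ∈ A j, ⁅x, y⁆ ∈ A (i + j))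
    (hdirect : DirectSum.IsInternal A)
    (h0 : A 0 = ⊥)
    (hsel : ∀ d : Fin 4 → ZMod n, NegOneIndependent d →
      ∀ x₁ ∈ A (d 0), ∀ x₂ ∈ A (d 1), ∀ x₃ ∈ A (d 2), ∀ x₄ ∈ A (d 3),
        ⁅⁅x₁, x₂⁆, ⁅x₃, x₄⁆⁆ = 0)
    (a b c : ZMod n) (ha : 3 < addOrderOf a)
    (xc : L) (hxc : xc ∈ A c)
    (y : Fin 7 → L)
    (hy : ∀ k, y k ∈ Submodule.span K
      {z : L | ∃ u ∈ A b, ∃ v ∈ A (a - b), z = ⁅u, v⁆}) :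
    ⁅⁅⁅⁅⁅⁅⁅xc, y 0⁆, y 1⁆, y 2⁆, y 3⁆, y 4⁆, y 5⁆, y 6⁆ = 0 := by
  -- helper: transfer membership between equal degrees
  have Amem : ∀ {d d' : ZMod n} {z : L}, z ∈ A d → d = d' → z ∈ A d' :=
    fun h e => e ▸ h
  -- helper: brackets of complementary degrees vanish
  have br0 : ∀ (d d' : ZMod n) (p q : L), p ∈ A d → q ∈ A d' → d + d' = 0 →
      ⁅p, q⁆ = 0 := by
    intro d d' p q hp hq hdd
    have h := hgrade d d' p hp q hq
    rw [hdd, h0, Submodule.mem_bot] at h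
    exact h
  -- order facts
  have hdvd : addOrderOf a ∣ n := by
    apply addOrderOf_dvd_of_nsmul_eq_zero
    have : (n : ZMod n) = 0 := ZMod.natCast_self n
    rw [nsmul_eq_mul, this, zero_mul]
  have hmodd : Odd (addOrderOf a) := by
    rcases Nat.even_or_odd (addOrderOf a) with he | ho
    · exfalso
      have h2 : 2 ∣ addOrderOf a := even_iff_two_dvd.mp he
      have h2n : 2 ∣ n := h2.trans hdvd
      rw [Nat.odd_iff] at hodd
      omega
    · exact ho
  have hm4 : 4 < addOrderOf a := by
    rcases Nat.lt_or_ge 4 (addOrderOf a) with h | h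
    · exact h
    · exfalso
      rw [Nat.odd_iff] at hmodd
      interval_cases h' : addOrderOf a <;> omega
  have hord : ∀ j : ℕ, 0 < j → j < addOrderOf a → ((j : ℕ) : ZMod n) * a ≠ 0 := by
    intro j hj hjm h
    have hsm : j • a = 0 := by rw [nsmul_eq_mul]; exact h
    have := addOrderOf_dvd_of_nsmul_eq_zero hsm
    have := Nat.le_of_dvd hj this
    omega
  have hA1 : a ≠ 0 := by
    have h := hord 1 (by norm_num) (by omega)
    push_cast at h
    simpa using h
  have hA2 : (2 : ZMod n) * a ≠ 0 := by
    have h := hord 2 (by norm_num) (by omega)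
    push_cast at h
    exact h
  have hA3 : (3 : ZMod n) * a ≠ 0 := by
    have h := hord 3 (by norm_num) (by omega)
    push_cast at h
    exact h
  have hA4 : (4 : ZMod n) * a ≠ 0 := by
    have h := hord 4 (by norm_num) (by omega)
    push_cast at h
    exact h
  -- every y k lies in A a
  have hya : ∀ k, y k ∈ A a := by
    intro k
    refine Submodule.span_le.mpr ?_ (hy k)
    rintro z ⟨u, hu, v, hv, rfl⟩
    exact Amem (hgrade _ _ _ hu _ hv) (by ring)
  -- memberships of the iterated brackets
  have hw1 : ⁅xc, y 0⁆ ∈ A (c + a) := hgrade _ _ _ hxc _ (hya 0)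
  have hw2 : ⁅⁅xc, y 0⁆, y 1⁆ ∈ A (c + 2 * a) :=
    Amem (hgrade _ _ _ hw1 _ (hya 1)) (by ring)
  have hw3 : ⁅⁅⁅xc, y 0⁆, y 1⁆, y 2⁆ ∈ A (c + 3 * a) :=
    Amem (hgrade _ _ _ hw2 _ (hya 2)) (by ring)
  have hw4 : ⁅⁅⁅⁅xc, y 0⁆, y 1⁆, y 2⁆, y 3⁆ ∈ A (c + 4 * a) :=
    Amem (hgrade _ _ _ hw3 _ (hya 3)) (by ring)
  have hw5 : ⁅⁅⁅⁅⁅xc, y 0⁆, y 1⁆, y 2⁆, y 3⁆, y 4⁆ ∈ A (c + 5 * a) :=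
    Amem (hgrade _ _ _ hw4 _ (hya 4)) (by ring)
  have hw6 : ⁅⁅⁅⁅⁅⁅xc, y 0⁆, y 1⁆, y 2⁆, y 3⁆, y 4⁆, y 5⁆ ∈ A (c + 6 * a) :=
    Amem (hgrade _ _ _ hw5 _ (hya 5)) (by ring)
  have hw7 : ⁅⁅⁅⁅⁅⁅⁅xc, y 0⁆, y 1⁆, y 2⁆, y 3⁆, y 4⁆, y 5⁆, y 6⁆ ∈ A (c + 7 * a) :=
    Amem (hgrade _ _ _ hw6 _ (hya 6)) (by ring)
  -- escape: if the degree of some intermediate bracket is 0 we are done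
  by_cases hE : c = 0 ∨ c + a = 0 ∨ c + 2 * a = 0 ∨ c + 3 * a = 0 ∨
      c + 4 * a = 0 ∨ c + 5 * a = 0 ∨ c + 6 * a = 0 ∨ c + 7 * a = 0
  · rcases hE with h | h | h | h | h | h | h | h
    · rw [h, h0, Submodule.mem_bot] at hxc
      rw [hxc]
      simp only [zero_lie]
    · rw [h, h0, Submodule.mem_bot] at hw1
      rw [hw1]
      simp only [zero_lie]
    · rw [h, h0, Submodule.mem_bot] at hw2
      rw [hw2]
      simp only [zero_lie]
    · rw [h, h0, Submodule.mem_bot] at hw3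
      rw [hw3]
      simp only [zero_lie]
    · rw [h, h0, Submodule.mem_bot] at hw4
      rw [hw4]
      simp only [zero_lie]
    · rw [h, h0, Submodule.mem_bot] at hw5
      rw [hw5]
      simp only [zero_lie]
    · rw [h, h0, Submodule.mem_bot] at hw6
      rw [hw6]
      simp only [zero_lie]
    · rw [h, h0, Submodule.mem_bot] at hw7
      exact hw7
  push_neg at hE
  obtain ⟨hc0, hc1, hc2, hc3, hc4, hc5, hc6, hc7⟩ := hE
  -- trivial cases b = 0 and b = a
  by_cases hb0 : b = 0
  · have hy0 : y 0 = 0 := by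
      have hsub : {z : L | ∃ u ∈ A b, ∃ v ∈ A (a - b), z = ⁅u, v⁆} ⊆
          ((⊥ : Submodule K L) : Set L) := by
        rintro z ⟨u, hu, v, hv, rfl⟩
        have hu0 : u = 0 := by
          have := Amem hu hb0
          rw [h0, Submodule.mem_bot] at this
          exact this
        simp [hu0]
      have := Submodule.span_le.mpr hsub (hy 0)
      rwa [Submodule.mem_bot] at this
    rw [hy0]
    simp only [lie_zero, zero_lie]
  by_cases hba : b = a
  · have hy0 : y 0 = 0 := by
      have hsub : {z : L | ∃ u ∈ A b, ∃ v ∈ A (a - b), z = ⁅u, v⁆} ⊆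
          ((⊥ : Submodule K L) : Set L) := by
        rintro z ⟨u, hu, v, hv, rfl⟩
        have hv0 : v = 0 := by
          have := Amem hv (by rw [hba, sub_self])
          rw [h0, Submodule.mem_bot] at this
          exact this
        simp [hv0]
      have := Submodule.span_le.mpr hsub (hy 0)
      rwa [Submodule.mem_bot] at this
    rw [hy0]
    simp only [lie_zero, zero_lie]
  -- Case A : b = 2a or b = -a
  have caseA :
      (∀ k, y k ∈ Submodule.span K
        {z : L | ∃ u ∈ A (2 * a), ∃ v ∈ A (-a), z = ⁅u, v⁆}) →
      ⁅⁅⁅⁅⁅⁅⁅xc, y 0⁆, y 1⁆, y 2⁆, y 3⁆, y 4⁆, y 5⁆, y 6⁆ = 0 := by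
    intro hyM
    -- the basic selective vanishing in case A
    have selA : ∀ d : ZMod n, d ≠ 0 → d + a ≠ 0 → d + 2 * a ≠ 0 →
        d + 3 * a ≠ 0 → d + 4 * a ≠ 0 → d - a ≠ 0 →
        ∀ p ∈ A d, ∀ u1 ∈ A (2 * a), ∀ u2 ∈ A (2 * a), ∀ v2 ∈ A (-a),
        ⁅⁅p, u1⁆, ⁅u2, v2⁆⁆ = 0 := by
      intro d hd hd1 hd2 hd3 hd4 hdm
      exact sel4 A hsel d (2 * a) (2 * a) (-a)
        hd hA2 hA2 (by intro h; exact hA1 (by linear_combination -h))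
        hd2 hd2 (by intro h; exact hdm (by linear_combination h))
        (by intro h; exact hA4 (by linear_combination h))
        (by intro h; exact hA1 (by linear_combination h))
        (by intro h; exact hA1 (by linear_combination h))
        (by intro h; exact hd4 (by linear_combination h))
        (by intro h; exact hd1 (by linear_combination h))
        (by intro h; exact hd1 (by linear_combination h))
        (by intro h; exact hA3 (by linear_combination h))
        (by intro h; exact hd3 (by linear_combination h))
    -- the tail lemma : ⁅⁅H, Y2⁆, Y3⁆ = 0 for H of degree 3a
    have LemT : (5 : ZMod n) * a ≠ 0 → (6 : ZMod n) * a ≠ 0 →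
        (7 : ZMod n) * a ≠ 0 →
        ∀ H' ∈ A (3 * a), ∀ u2 ∈ A (2 * a), ∀ v2 ∈ A (-a),
        ∀ u3 ∈ A (2 * a), ∀ v3 ∈ A (-a),
        ⁅⁅H', ⁅u2, v2⁆⁆, ⁅u3, v3⁆⁆ = 0 := by
      intro h5 h6 h7 H' hH u2 hu2 v2 hv2 u3 hu3 v3 hv3
      have hY3 : ⁅u3, v3⁆ ∈ A a := Amem (hgrade _ _ _ hu3 _ hv3) (by ring)
      rw [expand_br H' u2 v2, sub_lie]
      have t3 : ⁅⁅⁅H', u2⁆, v2⁆, ⁅u3, v3⁆⁆ = 0 := by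
        rw [swap_br _ _ _ (br0 (-a) a v2 _ hv2 hY3 (by ring))]
        rw [selA (3 * a) hA3
          (by intro h; exact hA4 (by linear_combination h))
          (by intro h; exact h5 (by linear_combination h))
          (by intro h; exact h6 (by linear_combination h))
          (by intro h; exact h7 (by linear_combination h))
          (by intro h; exact hA2 (by linear_combination h))
          H' hH u2 hu2 u3 hu3 v3 hv3, zero_lie]
      have t4 : ⁅⁅⁅H', v2⁆, u2⁆, ⁅u3, v3⁆⁆ = 0 :=
        selA (2 * a) hA2
          (by intro h; exact hA3 (by linear_combination h))
          (by intro h; exact hA4 (by linear_combination h))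
          (by intro h; exact h5 (by linear_combination h))
          (by intro h; exact h6 (by linear_combination h))
          (by intro h; exact hA1 (by linear_combination h))
          _ (Amem (hgrade _ _ _ hH _ hv2) (by ring)) u2 hu2 u3 hu3 v3 hv3
      rw [t3, t4, sub_zero]
    -- triple span induction helper
    have trip : ∀ w : L,
        (∀ u1 ∈ A (2 * a), ∀ v1 ∈ A (-a), ∀ u2 ∈ A (2 * a), ∀ v2 ∈ A (-a),
          ∀ u3 ∈ A (2 * a), ∀ v3 ∈ A (-a),
          ⁅⁅⁅w, ⁅u1, v1⁆⁆, ⁅u2, v2⁆⁆, ⁅u3, v3⁆⁆ = 0) →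
        ∀ Y1 ∈ Submodule.span K
          {z : L | ∃ u ∈ A (2 * a), ∃ v ∈ A (-a), z = ⁅u, v⁆},
        ∀ Y2 ∈ Submodule.span K
          {z : L | ∃ u ∈ A (2 * a), ∃ v ∈ A (-a), z = ⁅u, v⁆},
        ∀ Y3 ∈ Submodule.span K
          {z : L | ∃ u ∈ A (2 * a), ∃ v ∈ A (-a), z = ⁅u, v⁆},
        ⁅⁅⁅w, Y1⁆, Y2⁆, Y3⁆ = 0 := by
      intro w GEN Y1 hY1
      refine Submodule.span_induction
        (p := fun Y1 _ => ∀ Y2 ∈ Submodule.span K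
          {z : L | ∃ u ∈ A (2 * a), ∃ v ∈ A (-a), z = ⁅u, v⁆},
          ∀ Y3 ∈ Submodule.span K
          {z : L | ∃ u ∈ A (2 * a), ∃ v ∈ A (-a), z = ⁅u, v⁆},
          ⁅⁅⁅w, Y1⁆, Y2⁆, Y3⁆ = 0) ?_ ?_ ?_ ?_ hY1
      · rintro z ⟨u1, hu1, v1, hv1, rfl⟩ Y2 hY2
        refine Submodule.span_induction
          (p := fun Y2 _ => ∀ Y3 ∈ Submodule.span K
            {z : L | ∃ u ∈ A (2 * a), ∃ v ∈ A (-a), z = ⁅u, v⁆},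
            ⁅⁅⁅w, ⁅u1, v1⁆⁆, Y2⁆, Y3⁆ = 0) ?_ ?_ ?_ ?_ hY2
        · rintro z' ⟨u2, hu2, v2, hv2, rfl⟩ Y3 hY3
          refine Submodule.span_induction
            (p := fun Y3 _ => ⁅⁅⁅w, ⁅u1, v1⁆⁆, ⁅u2, v2⁆⁆, Y3⁆ = 0)
            ?_ ?_ ?_ ?_ hY3
          · rintro z'' ⟨u3, hu3, v3, hv3, rfl⟩
            exact GEN u1 hu1 v1 hv1 u2 hu2 v2 hv2 u3 hu3 v3 hv3
          · simp
          · intro p q _ _ hp hq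
            rw [lie_add, hp, hq, add_zero]
          · intro r p _ hp
            rw [lie_smul, hp, smul_zero]
        · intro Y3 hY3
          simp
        · intro p q _ _ hp hq Y3 hY3
          rw [lie_add, add_lie, hp _ hY3, hq _ hY3, add_zero]
        · intro r p _ hp Y3 hY3
          rw [lie_smul, smul_lie, hp _ hY3, smul_zero]
      · intro Y2 _ Y3 _
        simp
      · intro p q _ _ hp hq Y2 hY2 Y3 hY3
        rw [lie_add, add_lie, add_lie, hp _ hY2 _ hY3, hq _ hY2 _ hY3,
          add_zero]
      · intro r p _ hp Y2 hY2 Y3 hY3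
        rw [lie_smul, smul_lie, smul_lie, hp _ hY2 _ hY3, smul_zero]
    by_cases hcEqA : c = a
    · -- subcase c = a
      have hA5 : (5 : ZMod n) * a ≠ 0 := by
        intro h; apply hc4; rw [hcEqA]; linear_combination h
      have hA6 : (6 : ZMod n) * a ≠ 0 := by
        intro h; apply hc5; rw [hcEqA]; linear_combination h
      have hA7 : (7 : ZMod n) * a ≠ 0 := by
        intro h; apply hc6; rw [hcEqA]; linear_combination h
      have hxa : xc ∈ A a := Amem hxc hcEqA
      have GEN : ∀ u1 ∈ A (2 * a), ∀ v1 ∈ A (-a), ∀ u2 ∈ A (2 * a),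
          ∀ v2 ∈ A (-a), ∀ u3 ∈ A (2 * a), ∀ v3 ∈ A (-a),
          ⁅⁅⁅xc, ⁅u1, v1⁆⁆, ⁅u2, v2⁆⁆, ⁅u3, v3⁆⁆ = 0 := by
        intro u1 hu1 v1 hv1 u2 hu2 v2 hv2 u3 hu3 v3 hv3
        have hY2 : ⁅u2, v2⁆ ∈ A a := Amem (hgrade _ _ _ hu2 _ hv2) (by ring)
        have hY3 : ⁅u3, v3⁆ ∈ A a := Amem (hgrade _ _ _ hu3 _ hv3) (by ring)
        have s0 : ⁅xc, v1⁆ = 0 := br0 a (-a) _ _ hxa hv1 (by ring)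
        have e1 : ⁅xc, ⁅u1, v1⁆⁆ = ⁅⁅xc, u1⁆, v1⁆ := by
          rw [expand_br, s0, zero_lie, sub_zero]
        have hW : ⁅xc, u1⁆ ∈ A (3 * a) :=
          Amem (hgrade _ _ _ hxa _ hu1) (by ring)
        rw [e1, swap_br _ _ _ (br0 (-a) a v1 _ hv1 hY2 (by ring))]
        rw [swap_br _ _ _ (br0 (-a) a v1 _ hv1 hY3 (by ring))]
        rw [LemT hA5 hA6 hA7 _ hW u2 hu2 v2 hv2 u3 hu3 v3 hv3, zero_lie]
      have h3 := trip xc GEN (y 0) (hyM 0) (y 1) (hyM 1) (y 2) (hyM 2)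
      rw [h3]
      simp only [zero_lie]
    by_cases hcEq2A : c = 2 * a
    · -- subcase c = 2a
      have hA5 : (5 : ZMod n) * a ≠ 0 := by
        intro h; apply hc3; rw [hcEq2A]; linear_combination h
      have hA6 : (6 : ZMod n) * a ≠ 0 := by
        intro h; apply hc4; rw [hcEq2A]; linear_combination h
      have hA7 : (7 : ZMod n) * a ≠ 0 := by
        intro h; apply hc5; rw [hcEq2A]; linear_combination h
      have hx2 : xc ∈ A (2 * a) := Amem hxc hcEq2A
      have GEN : ∀ u1 ∈ A (2 * a), ∀ v1 ∈ A (-a), ∀ u2 ∈ A (2 * a),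
          ∀ v2 ∈ A (-a), ∀ u3 ∈ A (2 * a), ∀ v3 ∈ A (-a),
          ⁅⁅⁅xc, ⁅u1, v1⁆⁆, ⁅u2, v2⁆⁆, ⁅u3, v3⁆⁆ = 0 := by
        intro u1 hu1 v1 hv1 u2 hu2 v2 hv2 u3 hu3 v3 hv3
        have hY2 : ⁅u2, v2⁆ ∈ A a := Amem (hgrade _ _ _ hu2 _ hv2) (by ring)
        rw [expand_br xc u1 v1, sub_lie, sub_lie]
        have t1 : ⁅⁅⁅⁅xc, u1⁆, v1⁆, ⁅u2, v2⁆⁆, ⁅u3, v3⁆⁆ = 0 := by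
          have i1 : ⁅⁅xc, u1⁆, ⁅u2, v2⁆⁆ = 0 :=
            selA (2 * a) hA2
              (by intro h; exact hA3 (by linear_combination h))
              (by intro h; exact hA4 (by linear_combination h))
              (by intro h; exact hA5 (by linear_combination h))
              (by intro h; exact hA6 (by linear_combination h))
              (by intro h; exact hA1 (by linear_combination h))
              xc hx2 u1 hu1 u2 hu2 v2 hv2
          rw [swap_br _ _ _ (br0 (-a) a v1 _ hv1 hY2 (by ring)), i1,
            zero_lie, zero_lie]
        have t2 : ⁅⁅⁅⁅xc, v1⁆, u1⁆, ⁅u2, v2⁆⁆, ⁅u3, v3⁆⁆ = 0 :=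
          LemT hA5 hA6 hA7 ⁅⁅xc, v1⁆, u1⁆
            (Amem (hgrade _ _ _ (hgrade _ _ _ hxc _ hv1) _ hu1)
              (by rw [hcEq2A]; ring)) u2 hu2 v2 hv2 u3 hu3 v3 hv3
        rw [t1, t2, sub_zero]
      have h3 := trip xc GEN (y 0) (hyM 0) (y 1) (hyM 1) (y 2) (hyM 2)
      rw [h3]
      simp only [zero_lie]
    · -- subcase c generic (in case A)
      have GEN : ∀ u1 ∈ A (2 * a), ∀ v1 ∈ A (-a), ∀ u2 ∈ A (2 * a),
          ∀ v2 ∈ A (-a), ∀ u3 ∈ A (2 * a), ∀ v3 ∈ A (-a),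
          ⁅⁅⁅xc, ⁅u1, v1⁆⁆, ⁅u2, v2⁆⁆, ⁅u3, v3⁆⁆ = 0 := by
        intro u1 hu1 v1 hv1 u2 hu2 v2 hv2 u3 hu3 v3 hv3
        suffices h : ⁅⁅xc, ⁅u1, v1⁆⁆, ⁅u2, v2⁆⁆ = 0 by rw [h, zero_lie]
        have hY2 : ⁅u2, v2⁆ ∈ A a := Amem (hgrade _ _ _ hu2 _ hv2) (by ring)
        rw [expand_br xc u1 v1, sub_lie]
        have t1 : ⁅⁅⁅xc, u1⁆, v1⁆, ⁅u2, v2⁆⁆ = 0 := by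
          rw [swap_br _ _ _ (br0 (-a) a v1 _ hv1 hY2 (by ring)),
            selA c hc0 hc1 hc2 hc3 hc4 (sub_ne_zero.mpr hcEqA)
              xc hxc u1 hu1 u2 hu2 v2 hv2, zero_lie]
        have t2 : ⁅⁅⁅xc, v1⁆, u1⁆, ⁅u2, v2⁆⁆ = 0 :=
          selA (c + -a)
            (by intro h; exact hcEqA (by linear_combination h))
            (by intro h; exact hc0 (by linear_combination h))
            (by intro h; exact hc1 (by linear_combination h))
            (by intro h; exact hc2 (by linear_combination h))
            (by intro h; exact hc3 (by linear_combination h))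
            (by intro h; exact hcEq2A (by linear_combination h))
            _ (hgrade _ _ _ hxc _ hv1) u1 hu1 u2 hu2 v2 hv2
        rw [t1, t2, sub_zero]
      have h2 := trip xc GEN (y 0) (hyM 0) (y 1) (hyM 1) (y 2) (hyM 2)
      rw [h2]
      simp only [zero_lie]
  by_cases hb2 : b = 2 * a
  · apply caseA
    intro k
    refine Submodule.span_le.mpr ?_ (hy k)
    rintro z ⟨u, hu, v, hv, rfl⟩
    exact Submodule.subset_span
      ⟨u, Amem hu hb2, v, Amem hv (by rw [hb2]; ring), rfl⟩
  by_cases hbm : b = -a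
  · apply caseA
    intro k
    refine Submodule.span_le.mpr ?_ (hy k)
    rintro z ⟨u, hu, v, hv, rfl⟩
    have hu' : u ∈ A (-a) := Amem hu hbm
    have hv' : v ∈ A (2 * a) := Amem hv (by rw [hbm]; ring)
    rw [← lie_skew]
    exact Submodule.neg_mem _
      (Submodule.subset_span ⟨v, hv', u, hu', rfl⟩)
  -- generic case
  have main2 : ∀ e : ZMod n, e ≠ 0 → e + a ≠ 0 → e + 2 * a ≠ 0 →
      e + b ≠ 0 → e + (a - b) ≠ 0 → e + a + b ≠ 0 → e + 2 * a - b ≠ 0 →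
      ∀ w ∈ A e, ∀ Y1 ∈ A a,
      ∀ Y2 ∈ Submodule.span K
        {z : L | ∃ u ∈ A b, ∃ v ∈ A (a - b), z = ⁅u, v⁆},
      ⁅⁅w, Y1⁆, Y2⁆ = 0 := by
    intro e he he1 he2 heb hebab heab he2ab w hw Y1 hY1 Y2 hY2
    refine Submodule.span_induction
      (p := fun Y2 _ => ⁅⁅w, Y1⁆, Y2⁆ = 0) ?_ ?_ ?_ ?_ hY2
    · rintro z ⟨u, hu, v, hv, rfl⟩
      exact sel4 A hsel e a b (a - b)
        he hA1 hb0 (sub_ne_zero.mpr fun h => hba h.symm)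
        he1 heb (by intro h; exact hebab (by linear_combination h))
        (by intro h; exact hbm (by linear_combination h))
        (by intro h; exact hb2 (by linear_combination -h))
        (by intro h; exact hA1 (by linear_combination h))
        heab
        (by intro h; exact he2ab (by linear_combination h))
        (by intro h; exact he1 (by linear_combination h))
        (by intro h; exact hA2 (by linear_combination h))
        (by intro h; exact he2 (by linear_combination h))
        w hw Y1 hY1 u hu v hv
    · simp
    · intro p q _ _ hp hq
      rw [lie_add, hp, hq, add_zero]
    · intro r p _ hp
      rw [lie_smul, hp, smul_zero]
  -- pigeonhole: find a good position k ≤ 4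
  have hinj : ∀ i j : ℕ, i < j → j ≤ 4 →
      c + (i : ZMod n) * a ≠ c + (j : ZMod n) * a := by
    intro i j hij hj4 h
    have hz : ((j - i : ℕ) : ZMod n) * a = 0 := by
      rw [Nat.cast_sub hij.le]
      linear_combination -h
    exact hord (j - i) (by omega)
      (lt_of_le_of_lt (by omega : j - i ≤ 4) hm4) hz
  have hgood : ∃ k : ℕ, k ≤ 4 ∧ c + (k : ZMod n) * a ≠ -b ∧
      c + (k : ZMod n) * a ≠ b - a ∧ c + (k : ZMod n) * a ≠ -a - b ∧
      c + (k : ZMod n) * a ≠ b - 2 * a := by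
    by_contra hbad
    push_neg at hbad
    have hmem : ∀ k : Fin 5, c + ((k : ℕ) : ZMod n) * a ∈
        ({-b, b - a, -a - b, b - 2 * a} : Finset (ZMod n)) := by
      intro k
      simp only [Finset.mem_insert, Finset.mem_singleton]
      by_cases e1 : c + ((k : ℕ) : ZMod n) * a = -b
      · exact Or.inl e1
      by_cases e2 : c + ((k : ℕ) : ZMod n) * a = b - a
      · exact Or.inr (Or.inl e2)
      by_cases e3 : c + ((k : ℕ) : ZMod n) * a = -a - b
      · exact Or.inr (Or.inr (Or.inl e3))
      exact Or.inr (Or.inr (Or.inr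
        (hbad (k : ℕ) (by omega) e1 e2 e3)))
    have hInj : Set.InjOn (fun k : Fin 5 => c + ((k : ℕ) : ZMod n) * a)
        ↑(Finset.univ : Finset (Fin 5)) := by
      intro k _ l _ hkl
      by_contra hne
      have hkl' : c + ((k : ℕ) : ZMod n) * a = c + ((l : ℕ) : ZMod n) * a := hkl
      have hklv : (k : ℕ) ≠ (l : ℕ) := fun h => hne (Fin.ext h)
      have hkb := k.isLt
      have hlb := l.isLt
      rcases Nat.lt_or_ge (k : ℕ) (l : ℕ) with h | h
      · exact hinj _ _ h (by omega) hkl'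
      · exact hinj _ _ (by omega) (by omega) hkl'.symm
    have hcard := Finset.card_le_card_of_injOn
      (fun k : Fin 5 => c + ((k : ℕ) : ZMod n) * a)
      (fun k _ => hmem k) hInj
    have h5 : (Finset.univ : Finset (Fin 5)).card = 5 := by simp
    have h4 : ({-b, b - a, -a - b, b - 2 * a} : Finset (ZMod n)).card ≤ 4 := by
      apply le_trans (Finset.card_insert_le _ _)
      have h3' : ({b - a, -a - b, b - 2 * a} : Finset (ZMod n)).card ≤ 3 := by
        apply le_trans (Finset.card_insert_le _ _)
        have h2' : ({-a - b, b - 2 * a} : Finset (ZMod n)).card ≤ 2 := by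
          apply le_trans (Finset.card_insert_le _ _)
          simp
        omega
      omega
    omega
  obtain ⟨k, hk4, hk1, hk2, hk3, hk4'⟩ := hgood
  interval_cases k
  · push_cast at hk1 hk2 hk3 hk4'
    have hz : ⁅⁅xc, y 0⁆, y 1⁆ = 0 :=
      main2 c hc0 hc1 hc2
        (by intro h; exact hk1 (by linear_combination h))
        (by intro h; exact hk2 (by linear_combination h))
        (by intro h; exact hk3 (by linear_combination h))
        (by intro h; exact hk4' (by linear_combination h))
        xc hxc (y 0) (hya 0) (y 1) (hy 1)
    rw [hz]
    simp only [zero_lie]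
  · push_cast at hk1 hk2 hk3 hk4'
    have hz : ⁅⁅⁅xc, y 0⁆, y 1⁆, y 2⁆ = 0 :=
      main2 (c + a)
        (by intro h; exact hc1 (by linear_combination h))
        (by intro h; exact hc2 (by linear_combination h))
        (by intro h; exact hc3 (by linear_combination h))
        (by intro h; exact hk1 (by linear_combination h))
        (by intro h; exact hk2 (by linear_combination h))
        (by intro h; exact hk3 (by linear_combination h))
        (by intro h; exact hk4' (by linear_combination h))
        _ hw1 (y 1) (hya 1) (y 2) (hy 2)
    rw [hz]
    simp only [zero_lie]
  · push_cast at hk1 hk2 hk3 hk4'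
    have hz : ⁅⁅⁅⁅xc, y 0⁆, y 1⁆, y 2⁆, y 3⁆ = 0 :=
      main2 (c + 2 * a)
        (by intro h; exact hc2 (by linear_combination h))
        (by intro h; exact hc3 (by linear_combination h))
        (by intro h; exact hc4 (by linear_combination h))
        (by intro h; exact hk1 (by linear_combination h))
        (by intro h; exact hk2 (by linear_combination h))
        (by intro h; exact hk3 (by linear_combination h))
        (by intro h; exact hk4' (by linear_combination h))
        _ hw2 (y 2) (hya 2) (y 3) (hy 3)
    rw [hz]
    simp only [zero_lie]
  · push_cast at hk1 hk2 hk3 hk4'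
    have hz : ⁅⁅⁅⁅⁅xc, y 0⁆, y 1⁆, y 2⁆, y 3⁆, y 4⁆ = 0 :=
      main2 (c + 3 * a)
        (by intro h; exact hc3 (by linear_combination h))
        (by intro h; exact hc4 (by linear_combination h))
        (by intro h; exact hc5 (by linear_combination h))
        (by intro h; exact hk1 (by linear_combination h))
        (by intro h; exact hk2 (by linear_combination h))
        (by intro h; exact hk3 (by linear_combination h))
        (by intro h; exact hk4' (by linear_combination h))
        _ hw3 (y 3) (hya 3) (y 4) (hy 4)
    rw [hz]
    simp only [zero_lie]
  · push_cast at hk1 hk2 hk3 hk4'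
    have hz : ⁅⁅⁅⁅⁅⁅xc, y 0⁆, y 1⁆, y 2⁆, y 3⁆, y 4⁆, y 5⁆ = 0 :=
      main2 (c + 4 * a)
        (by intro h; exact hc4 (by linear_combination h))
        (by intro h; exact hc5 (by linear_combination h))
        (by intro h; exact hc6 (by linear_combination h))
        (by intro h; exact hk1 (by linear_combination h))
        (by intro h; exact hk2 (by linear_combination h))
        (by intro h; exact hk3 (by linear_combination h))
        (by intro h; exact hk4' (by linear_combination h))
        _ hw4 (y 4) (hya 4) (y 5) (hy 5)
    rw [hz]
    simp only [zero_lie]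
end

section
/- Let L be a (Z/nZ)-graded Lie algebra, L = ⊕ L_i, with L_0 = 0 and n odd. Then for any a ∈ Z/nZ and any x, y ∈ L_a, z ∈ L_{-2a}, the product [[x, y], [y', z]] = 0 for all y' ∈ L_a; equivalently, [[L_a, L_a], [L_a, L_{-2a}]] = 0. -/
theorem stmt_9 (n : ℕ) (hpos : 0 < n) (hodd : Odd n)
    (K : Type) (L : Type) [Field K] [LieRing L] [LieAlgebra K L]
    (A : ZMod n → Submodule K L)
    (hgrade : ∀ i j : ZMod n, ∀ x ∈ A i, ∀ y ∈ A j, ⁅x, y⁆ ∈ A (i + j))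
    (hdirect : DirectSum.IsInternal A)
    (h0 : A 0 = ⊥)
    (a : ZMod n) :
    ∀ x ∈ A a, ∀ y ∈ A a, ∀ y' ∈ A a, ∀ z ∈ A (-2 * a),
      ⁅⁅x, y⁆, ⁅y', z⁆⁆ = 0 := by
  intro x hx y hy y' hy' z hz
  have hw : ⁅y', z⁆ ∈ A (-a) := by
    have := hgrade a (-2 * a) y' hy' z hz
    convert this using 2
    ring
  have hxw : ⁅x, ⁅y', z⁆⁆ = 0 := by
    have := hgrade a (-a) x hx _ hw
    rw [add_neg_cancel, h0, Submodule.mem_bot] at this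
    exact this
  have hyw : ⁅y, ⁅y', z⁆⁆ = 0 := by
    have := hgrade a (-a) y hy _ hw
    rw [add_neg_cancel, h0, Submodule.mem_bot] at this
    exact this
  rw [lie_lie, hxw, hyw, lie_zero, lie_zero, sub_zero]
end

section
/- Let L be a Lie algebra with a Frobenius group FH of automorphisms, F = ⟨φ⟩ cyclic of odd order n, H = ⟨h⟩ of order 2 with h φ h^{-1} = φ^{-1}, over a field containing a primitive n-th root of unity ω. Suppose the fixed-point subalgebra C_L(H) is metabelian. Let L_i denote the ω^i-eigenspace of φ. Then for any (-1)-independent sequence (d_1, d_2, d_3, d_4) in Z/nZ, [[L_{d_1}, L_{d_2}], [L_{d_3}, L_{d_4}]] = 0. -/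
namespace IsPrimitiveRoot

variable {M : Type*} [CommMonoid M] {ω : M} {n : ℕ} [NeZero n]

theorem pow_eq_pow_iff_natCast_eq (hω : IsPrimitiveRoot ω n) {i j : ℕ} :
    ω ^ i = ω ^ j ↔ (i : ZMod n) = j := by
  rw [(hω.isOfFinOrder (NeZero.ne n)).pow_eq_pow_iff_modEq, ← hω.eq_orderOf,
    ZMod.natCast_eq_natCast_iff]

theorem pow_val_add (hω : IsPrimitiveRoot ω n) (a b : ZMod n) :
    ω ^ (a + b).val = ω ^ a.val * ω ^ b.val := by
  rw [← pow_add, hω.pow_eq_pow_iff_natCast_eq]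
  simp

theorem pow_val_injective (hω : IsPrimitiveRoot ω n) :
    Function.Injective fun a : ZMod n => ω ^ a.val := fun a b hab => by
  simpa [hω.pow_eq_pow_iff_natCast_eq] using hab

theorem pow_val_neg {G : Type*} [DivisionCommMonoid G] {ω : G} (hω : IsPrimitiveRoot ω n)
    (a : ZMod n) : ω ^ (-a).val = (ω ^ a.val)⁻¹ :=
  eq_inv_of_mul_eq_one_left <| by rw [← hω.pow_val_add, neg_add_cancel, ZMod.val_zero, pow_zero]

end IsPrimitiveRoot

theorem NegOneIndependent.forall_eq_false_of_sum_eq {n k : ℕ} (hodd : Odd n)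
    {d : Fin k → ZMod n} (hind : NegOneIndependent d) {t : Fin k → Bool}
    (hsum : ∑ i, (if t i then -d i else d i) = ∑ i, d i) : ∀ i, t i = false := by
  by_contra! ⟨i, hi⟩
  refine hind ⟨t, ⟨i, by simpa using hi⟩, ?_⟩
  have htwo : IsUnit (2 : ZMod n) := by
    exact_mod_cast (ZMod.isUnit_iff_coprime 2 n).mpr (Nat.coprime_two_left.mpr hodd)
  have hdiff : ∑ j, 2 * (if t j then d j else 0) =
      ∑ j, d j - ∑ j, (if t j then -d j else d j) := by
    rw [← Finset.sum_sub_distrib]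
    refine Finset.sum_congr rfl fun j _ => ?_
    split_ifs <;> ring
  refine htwo.mul_left_cancel ?_
  rw [mul_zero, Finset.mul_sum, hdiff, hsum, sub_self]

theorem Module.End.eq_zero_of_mem_eigenspace_of_add_sum_eq_zero {K M ι : Type*} [Field K]
    [AddCommGroup M] [Module K M] {f : Module.End K M} {μ : K} {x : M}
    (hx : x ∈ f.eigenspace μ) {s : Finset ι} {v : ι → M} {ν : ι → K}
    (hv : ∀ i ∈ s, v i ∈ f.eigenspace (ν i)) (hν : ∀ i ∈ s, ν i ≠ μ)
    (hsum : x + ∑ i ∈ s, v i = 0) : x = 0 := by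
  refine Submodule.disjoint_def.mp (f.eigenspaces_iSupIndep μ) x hx ?_
  rw [eq_neg_of_add_eq_zero_left hsum, ← Finset.sum_neg_distrib]
  exact Submodule.sum_mem _ fun i hi =>
    Submodule.mem_iSup_of_mem (ν i) (Submodule.mem_iSup_of_mem (hν i hi) (neg_mem (hv i hi)))

theorem LinearEquiv.apply_mem_eigenspace_inv_of_mul_mul_inv_eq_inv {K M : Type*} [Field K]
    [AddCommGroup M] [Module K M] {φ h : M ≃ₗ[K] M} (hrel : h * φ * h⁻¹ = φ⁻¹) {μ : K}
    (hμ : μ ≠ 0) {x : M} (hx : x ∈ Module.End.eigenspace (φ : Module.End K M) μ) :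
    h x ∈ Module.End.eigenspace (φ : Module.End K M) μ⁻¹ := by
  rw [Module.End.mem_eigenspace_iff] at hx ⊢
  have hinv : φ⁻¹ (h x) = μ • h x := by
    rw [← mul_apply, ← mul_inv_eq_iff_eq_mul.mp hrel, mul_apply]
    exact (congrArg h hx).trans (map_smul h μ x)
  apply φ⁻¹.injective
  rw [map_smul, hinv, smul_smul, inv_mul_cancel₀ hμ, one_smul]
  exact φ.symm_apply_apply (h x)

section LieAlgebra

variable {R L : Type*} [CommRing R] [LieRing L] [LieAlgebra R L]

-- The fields quantify over an arbitrary `DecidableEq (Fin 4)` instance; `simp` can only decide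
-- `Function.update` for the canonical one, hence the `Subsingleton.elim`.
variable (R L) in
def lieLieMultilinearMap : MultilinearMap R (fun _ : Fin 4 => L) L where
  toFun v := ⁅⁅v 0, v 1⁆, ⁅v 2, v 3⁆⁆
  map_update_add' := by
    intro _ v i x y
    obtain rfl := Subsingleton.elim ‹DecidableEq (Fin 4)› (instDecidableEqFin 4)
    fin_cases i <;> simp [lie_add, add_lie]
  map_update_smul' := by
    intro _ v i c x
    obtain rfl := Subsingleton.elim ‹DecidableEq (Fin 4)› (instDecidableEqFin 4)
    fin_cases i <;> simp [lie_smul, smul_lie]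

theorem lie_lie_sum_sum {ι : Type*} [Fintype ι] (g : Fin 4 → ι → L) :
    ⁅⁅∑ a, g 0 a, ∑ a, g 1 a⁆, ⁅∑ a, g 2 a, ∑ a, g 3 a⁆⁆ =
      ∑ t : Fin 4 → ι, ⁅⁅g 0 (t 0), g 1 (t 1)⁆, ⁅g 2 (t 2), g 3 (t 3)⁆⁆ := by
  classical
  exact (lieLieMultilinearMap ℤ L).map_sum g

theorem lie_mem_eigenspace_mul {f : Module.End R L} (hf : ∀ x y, f ⁅x, y⁆ = ⁅f x, f y⁆)
    {μ ν : R} {x y : L} (hx : x ∈ f.eigenspace μ) (hy : y ∈ f.eigenspace ν) :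
    ⁅x, y⁆ ∈ f.eigenspace (μ * ν) := by
  rw [Module.End.mem_eigenspace_iff] at hx hy ⊢
  rw [hf, hx, hy, smul_lie, lie_smul, smul_smul]

theorem lie_lie_mem_eigenspace_pow_val_sum {n : ℕ} [NeZero n] {ω : R} (hω : IsPrimitiveRoot ω n)
    {f : Module.End R L} (hf : ∀ x y, f ⁅x, y⁆ = ⁅f x, f y⁆) {e : Fin 4 → ZMod n} {v : Fin 4 → L}
    (hv : ∀ i, v i ∈ f.eigenspace (ω ^ (e i).val)) :
    ⁅⁅v 0, v 1⁆, ⁅v 2, v 3⁆⁆ ∈ f.eigenspace (ω ^ (∑ i, e i).val) := by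
  rw [Fin.sum_univ_four, hω.pow_val_add, hω.pow_val_add, hω.pow_val_add, mul_assoc]
  exact lie_mem_eigenspace_mul hf (lie_mem_eigenspace_mul hf (hv 0) (hv 1))
    (lie_mem_eigenspace_mul hf (hv 2) (hv 3))

end LieAlgebra

theorem lie_lie_eq_zero_of_negOneIndependent {K L : Type*} [Field K] [LieRing L]
    [LieAlgebra K L] {n : ℕ} (hodd : Odd n) {ω : K} (hω : IsPrimitiveRoot ω n)
    {φ h : L ≃ₗ[K] L} (hφ : ∀ x y : L, φ ⁅x, y⁆ = ⁅φ x, φ y⁆) (hh : h * h = 1)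
    (hrel : h * φ * h⁻¹ = φ⁻¹)
    (hmeta : ∀ x₁ x₂ x₃ x₄ : L, h x₁ = x₁ → h x₂ = x₂ → h x₃ = x₃ → h x₄ = x₄ →
      ⁅⁅x₁, x₂⁆, ⁅x₃, x₄⁆⁆ = 0)
    {d : Fin 4 → ZMod n} (hind : NegOneIndependent d) {x : Fin 4 → L}
    (hx : ∀ i, x i ∈ Module.End.eigenspace (φ : Module.End K L) (ω ^ (d i).val)) :
    ⁅⁅x 0, x 1⁆, ⁅x 2, x 3⁆⁆ = 0 := by
  have : NeZero n := ⟨hodd.pos.ne'⟩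
  let y : Fin 4 → Bool → L := fun i b => cond b (h (x i)) (x i)
  have hy : ∀ i b, y i b ∈
      Module.End.eigenspace (φ : Module.End K L) (ω ^ (if b then -d i else d i).val) := by
    intro i b
    cases b
    · exact hx i
    · rw [if_pos rfl, hω.pow_val_neg]
      exact LinearEquiv.apply_mem_eigenspace_inv_of_mul_mul_inv_eq_inv hrel
        (pow_ne_zero _ (hω.ne_zero (NeZero.ne n))) (hx i)
  have hfixed : ∀ i, h (∑ b, y i b) = ∑ b, y i b := fun i => by
    simp only [y, Fintype.sum_bool, cond_true, cond_false, map_add, ← LinearEquiv.mul_apply, hh,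
      LinearEquiv.coe_one, id, add_comm]
  have hexpand := hmeta _ _ _ _ (hfixed 0) (hfixed 1) (hfixed 2) (hfixed 3)
  rw [lie_lie_sum_sum y, ← Finset.add_sum_erase _ _ (Finset.mem_univ fun _ => false)] at hexpand
  have hterm : ∀ t ∈ Finset.univ.erase fun _ => false,
      ⁅⁅y 0 (t 0), y 1 (t 1)⁆, ⁅y 2 (t 2), y 3 (t 3)⁆⁆ ∈
        Module.End.eigenspace (φ : Module.End K L) (ω ^ (∑ i, if t i then -d i else d i).val) :=
    fun t _ => lie_lie_mem_eigenspace_pow_val_sum hω hφ fun i => hy i (t i)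
  have hne : ∀ t ∈ Finset.univ.erase fun _ => false,
      ω ^ (∑ i, if t i then -d i else d i).val ≠ ω ^ (∑ i, d i).val := fun t ht heq =>
    Finset.ne_of_mem_erase ht
      (funext (hind.forall_eq_false_of_sum_eq hodd (hω.pow_val_injective heq)))
  exact Module.End.eq_zero_of_mem_eigenspace_of_add_sum_eq_zero
    (lie_lie_mem_eigenspace_pow_val_sum hω hφ hx) hterm hne hexpand

theorem stmt_14_general (K : Type) (L : Type) [Field K] [LieRing L] [LieAlgebra K L]
    (n : ℕ) (hodd : Odd n)
    (ω : K) (hω : IsPrimitiveRoot ω n)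
    (φ h : L ≃ₗ[K] L)
    (hφbr : ∀ x y : L, φ ⁅x, y⁆ = ⁅φ x, φ y⁆)
    (hh2 : orderOf h = 2)
    (hrel : h * φ * h⁻¹ = φ⁻¹)
    -- the fixed-point subalgebra of H is metabelian
    (hmeta : ∀ x₁ x₂ x₃ x₄ : L, h x₁ = x₁ → h x₂ = x₂ → h x₃ = x₃ → h x₄ = x₄ →
      ⁅⁅x₁, x₂⁆, ⁅x₃, x₄⁆⁆ = 0)
    (d : Fin 4 → ZMod n) (hind : NegOneIndependent d)
    (x₁ : L) (hx₁ : x₁ ∈ Module.End.eigenspace (φ : Module.End K L) (ω ^ (d 0).val))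
    (x₂ : L) (hx₂ : x₂ ∈ Module.End.eigenspace (φ : Module.End K L) (ω ^ (d 1).val))
    (x₃ : L) (hx₃ : x₃ ∈ Module.End.eigenspace (φ : Module.End K L) (ω ^ (d 2).val))
    (x₄ : L) (hx₄ : x₄ ∈ Module.End.eigenspace (φ : Module.End K L) (ω ^ (d 3).val)) :
    ⁅⁅x₁, x₂⁆, ⁅x₃, x₄⁆⁆ = 0 := by
  refine lie_lie_eq_zero_of_negOneIndependent hodd hω hφbr ?_ hrel hmeta hind
    (x := ![x₁, x₂, x₃, x₄]) ?_
  · rw [← sq, ← hh2, pow_orderOf_eq_one]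
  · intro i
    fin_cases i <;> assumption

theorem stmt_14 (K : Type) (L : Type) [Field K] [LieRing L] [LieAlgebra K L]
    (n : ℕ) (hpos : 0 < n) (hodd : Odd n)
    (ω : K) (hω : IsPrimitiveRoot ω n)
    (φ h : L ≃ₗ[K] L)
    (hφbr : ∀ x y : L, φ ⁅x, y⁆ = ⁅φ x, φ y⁆)
    (hhbr : ∀ x y : L, h ⁅x, y⁆ = ⁅h x, h y⁆)
    (hφn : orderOf φ = n) (hh2 : orderOf h = 2)
    (hrel : h * φ * h⁻¹ = φ⁻¹)
    -- the fixed-point subalgebra of H is metabelian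
    (hmeta : ∀ x₁ x₂ x₃ x₄ : L, h x₁ = x₁ → h x₂ = x₂ → h x₃ = x₃ → h x₄ = x₄ →
      ⁅⁅x₁, x₂⁆, ⁅x₃, x₄⁆⁆ = 0)
    (d : Fin 4 → ZMod n) (hind : NegOneIndependent d)
    (x₁ : L) (hx₁ : x₁ ∈ Module.End.eigenspace (φ : Module.End K L) (ω ^ (d 0).val))
    (x₂ : L) (hx₂ : x₂ ∈ Module.End.eigenspace (φ : Module.End K L) (ω ^ (d 1).val))
    (x₃ : L) (hx₃ : x₃ ∈ Module.End.eigenspace (φ : Module.End K L) (ω ^ (d 2).val))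
    (x₄ : L) (hx₄ : x₄ ∈ Module.End.eigenspace (φ : Module.End K L) (ω ^ (d 3).val)) :
    ⁅⁅x₁, x₂⁆, ⁅x₃, x₄⁆⁆ = 0 :=
  stmt_14_general K L n hodd ω hω φ h hφbr hh2 hrel hmeta d hind x₁ hx₁ x₂ hx₂ x₃ hx₃ x₄ hx₄
end

section
/- Let L be a (Z/nZ)-graded Lie algebra, n odd, with L_0 = 0. Then for any a ∈ Z/nZ we have [[L_a, L_a],[L_a, L_{-2a}]] = 0 and also [[L_{-2a}, L_a],[L_a, L_a]] = 0. -/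
theorem stmt_18 (n : ℕ) (hpos : 0 < n) (hodd : Odd n)
    (K : Type) (L : Type) [Field K] [LieRing L] [LieAlgebra K L]
    (A : ZMod n → Submodule K L)
    (hgrade : ∀ i j : ZMod n, ∀ x ∈ A i, ∀ y ∈ A j, ⁅x, y⁆ ∈ A (i + j))
    (hdirect : DirectSum.IsInternal A)
    (h0 : A 0 = ⊥)
    (a : ZMod n) :
    (∀ x ∈ A a, ∀ y ∈ A a, ∀ z ∈ A a, ∀ w ∈ A (-2 * a),
      ⁅⁅x, y⁆, ⁅z, w⁆⁆ = 0) ∧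
    (∀ w ∈ A (-2 * a), ∀ x ∈ A a, ∀ y ∈ A a, ∀ z ∈ A a,
      ⁅⁅w, x⁆, ⁅y, z⁆⁆ = 0) := by
  have hz : ∀ u : L, u ∈ A 0 → u = 0 := by
    intro u hu; rw [h0] at hu; simpa using hu
  have key : ∀ u ∈ A a, ∀ v ∈ A (-a), ⁅u, v⁆ = 0 := by
    intro u hu v hv
    have := hgrade a (-a) u hu v hv
    rw [add_neg_cancel] at this
    exact hz _ this
  constructor
  · intro x hx y hy z hz' w hw
    have hzw : ⁅z, w⁆ ∈ A (-a) := by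
      have := hgrade a (-2 * a) z hz' w hw
      convert this using 2; ring
    rw [lie_lie, key x hx _ hzw, key y hy _ hzw, lie_zero, lie_zero, sub_zero]
  · intro w hw x hx y hy z hz'
    have hwx : ⁅w, x⁆ ∈ A (-a) := by
      have := hgrade (-2 * a) a w hw x hx
      convert this using 2; ring
    rw [← lie_skew, lie_lie]
    have h1 : ⁅y, ⁅w, x⁆⁆ = 0 := key y hy _ hwx
    have h2 : ⁅z, ⁅w, x⁆⁆ = 0 := key z hz' _ hwx
    rw [h1, h2, lie_zero, lie_zero, sub_zero, neg_zero]
end
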